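/- arXiv:1809.10272 — 2 statements merged into one kernel-verified Lean document; each statement's English description precedes it below -/
import Mathlib

section
/- Let K₁, …, Kₙ be non-empty finite sets, each of cardinality at most k (with k ≥ 2), equip ∏_{i=1}^n Kᵢ with the normalized Hamming metric d_n(x,y) := (1/n)·|{i : xᵢ ≠ yᵢ}|, let μ and ν be probability measures on ∏ᵢ Kᵢ, let λ be any coupling of μ and ν, and set δ := ∫ d_n(x,y) λ(dx,dy). Then |TC(μ) − TC(ν)| ≤ 2·( H(δ, 1−δ) + δ·log(k−1) )·n, where H(δ,1−δ) = −δ log δ − (1−δ) log(1−δ) is the binary entropy. -/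
open MeasureTheory Real

namespace Corr

variable {Ω : Type*} [MeasurableSpace Ω]

/-- Shannon entropy of a finite-valued random variable. -/
noncomputable def shEnt {K : Type*} [Fintype K] (μ : Measure Ω) (X : Ω → K) : ℝ :=
  ∑ k : K, Real.negMulLog ((μ (X ⁻¹' {k})).toReal)

/-- Conditional Shannon entropy `H(X | Y)`. -/
noncomputable def condEnt {K L : Type*} [Fintype K] [Fintype L]
    (μ : Measure Ω) (X : Ω → K) (Y : Ω → L) : ℝ :=
  shEnt μ (fun ω => (X ω, Y ω)) - shEnt μ Y

/-- Mutual information `I(X ; Y)`. -/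
noncomputable def mutInfo {K L : Type*} [Fintype K] [Fintype L]
    (μ : Measure Ω) (X : Ω → K) (Y : Ω → L) : ℝ :=
  shEnt μ X + shEnt μ Y - shEnt μ (fun ω => (X ω, Y ω))

/-- Conditional mutual information `I(X ; Y | Z)`. -/
noncomputable def condMutInfo {K L M : Type*} [Fintype K] [Fintype L] [Fintype M]
    (μ : Measure Ω) (X : Ω → K) (Y : Ω → L) (Z : Ω → M) : ℝ :=
  condEnt μ X Z + condEnt μ Y Z - condEnt μ (fun ω => (X ω, Y ω)) Z

/-- The joint random variable of a family of random variables. -/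
def joint {ι : Type*} {K : ι → Type*} (X : ∀ i, Ω → K i) : Ω → ∀ i, K i :=
  fun ω i => X i ω

/-- Total correlation `TC(X₁;…;Xₙ)`. -/
noncomputable def TC {ι : Type*} [Fintype ι] [DecidableEq ι] {K : ι → Type*}
    [∀ i, Fintype (K i)] (μ : Measure Ω) (X : ∀ i, Ω → K i) : ℝ :=
  (∑ i, shEnt μ (X i)) - shEnt μ (joint X)

/-- Dual total correlation `DTC(X₁;…;Xₙ)`. -/
noncomputable def DTC {ι : Type*} [Fintype ι] [DecidableEq ι] {K : ι → Type*}
    [∀ i, Fintype (K i)] (μ : Measure Ω) (X : ∀ i, Ω → K i) : ℝ :=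
  shEnt μ (joint X) - ∑ i, condEnt μ (X i) (joint fun j : {j : ι // j ≠ i} => X j.1)

/-- Conditional total correlation `TC(X₁;…;Xₙ | Y)`. -/
noncomputable def condTC {ι : Type*} [Fintype ι] [DecidableEq ι] {K : ι → Type*}
    [∀ i, Fintype (K i)] {L : Type*} [Fintype L]
    (μ : Measure Ω) (X : ∀ i, Ω → K i) (Y : Ω → L) : ℝ :=
  (∑ i, condEnt μ (X i) Y) - condEnt μ (joint X) Y

/-- Conditional dual total correlation `DTC(X₁;…;Xₙ | Y)`. -/
noncomputable def condDTC {ι : Type*} [Fintype ι] [DecidableEq ι] {K : ι → Type*}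
    [∀ i, Fintype (K i)] {L : Type*} [Fintype L]
    (μ : Measure Ω) (X : ∀ i, Ω → K i) (Y : Ω → L) : ℝ :=
  condEnt μ (joint X) Y -
    ∑ i, condEnt μ (X i)
      (fun ω => (joint (fun j : {j : ι // j ≠ i} => X j.1) ω, Y ω))

/-- The normalized Hamming distance `d_n(x,y) = |{i : xᵢ ≠ yᵢ}| / n` on `∏ i, K i`. -/
noncomputable def hammingDist {n : ℕ} {K : Fin n → Type*} [∀ i, DecidableEq (K i)]
    (x y : ∀ i, K i) : ℝ :=
  ((Finset.univ.filter fun i => x i ≠ y i).card : ℝ) / n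

end Corr

/-!
Couple `X ~ μ` and `Y ~ ν` through `λ`. Since `TC = ∑ H(Xᵢ) - H(X)`, it suffices to bound
`H(Xᵢ) - H(Yᵢ) ≤ H(Xᵢ | Yᵢ)` and `H(Y) - H(X) ≤ H(Y | X) ≤ ∑ H(Yᵢ | X) ≤ ∑ H(Yᵢ | Xᵢ)`; by Fano's
inequality each `H(Xᵢ | Yᵢ)` and `H(Yᵢ | Xᵢ)` is at most the `k`-ary entropy of
`δᵢ = λ(Xᵢ ≠ Yᵢ)`, and concavity of the `k`-ary entropy gives `∑ᵢ h_k(δᵢ) ≤ n h_k(δ)` because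
`δ` is the average of the `δᵢ`. Both the subadditivity of conditional entropy and Fano's
inequality are instances of Gibbs' inequality, against the reference weights
`P(U | W) P(V | W)` and `(1 - ε) 1[a = b] + ε / (k - 1) 1[a ≠ b]` with `ε = P(X ≠ Y)`.
-/

theorem negMulLog_le_neg_mul_log_add_sub {r t : ℝ} (hr : 0 ≤ r) (ht : 0 ≤ t)
    (hrt : r ≠ 0 → t ≠ 0) : negMulLog r ≤ -(r * log t) + (t - r) := by
  rcases hr.eq_or_lt with rfl | hr
  · simpa using ht
  have ht : 0 < t := ht.lt_of_ne' (hrt hr.ne')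
  have h := mul_le_mul_of_nonneg_left (log_le_sub_one_of_pos (div_pos ht hr)) hr.le
  rw [log_div ht.ne' hr.ne', mul_sub_one, mul_div_cancel₀ _ hr.ne'] at h
  rw [negMulLog]
  linarith

/-- Gibbs' inequality. -/
theorem sum_negMulLog_le_neg_sum_mul_log {ι : Type*} [Fintype ι] {r t : ι → ℝ}
    (hr : ∀ i, 0 ≤ r i) (ht : ∀ i, 0 ≤ t i) (hrt : ∀ i, r i ≠ 0 → t i ≠ 0)
    (hsum : ∑ i, t i ≤ ∑ i, r i) :
    ∑ i, negMulLog (r i) ≤ -∑ i, r i * log (t i) := by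
  calc ∑ i, negMulLog (r i) ≤ ∑ i, (-(r i * log (t i)) + (t i - r i)) :=
        Finset.sum_le_sum fun i _ => negMulLog_le_neg_mul_log_add_sub (hr i) (ht i) (hrt i)
    _ ≤ -∑ i, r i * log (t i) := by
        rw [Finset.sum_add_distrib, Finset.sum_sub_distrib, Finset.sum_neg_distrib]
        linarith

theorem mul_log_mul_of_ne_zero {r a b : ℝ} (h : r ≠ 0 → a ≠ 0 ∧ b ≠ 0) :
    r * log (a * b) = r * log a + r * log b := by
  by_cases hr : r = 0
  · simp [hr]
  · obtain ⟨ha, hb⟩ := h hr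
    rw [log_mul ha hb, mul_add]

theorem qaryEntropy_eq_negMulLog_add (q : ℕ) (p : ℝ) :
    qaryEntropy q p = negMulLog p + negMulLog (1 - p) + p * log (q - 1) := by
  rw [qaryEntropy, binEntropy_eq_negMulLog_add_negMulLog_one_sub]
  push_cast
  ring

theorem qaryEntropy_eq_neg_mul_log_add_mul_log_div {q : ℕ} (hq : (q : ℝ) - 1 ≠ 0) (p : ℝ) :
    qaryEntropy q p = -((1 - p) * log (1 - p) + p * log (p / (q - 1))) := by
  rw [qaryEntropy_eq_negMulLog_add, negMulLog, negMulLog]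
  rcases eq_or_ne p 0 with rfl | hp
  · simp
  · rw [log_div hp hq]
    ring

theorem sum_ite_eq_one_sub_div_le_one {K : Type*} [Fintype K] [DecidableEq K] {k : ℕ}
    (hk : 2 ≤ k) (hcard : Fintype.card K ≤ k) {ε : ℝ} (hε : 0 ≤ ε) (b : K) :
    ∑ a, (if a = b then 1 - ε else ε / (k - 1)) ≤ 1 := by
  have hk1 : (0 : ℝ) < k - 1 := by
    have : (2 : ℝ) ≤ k := by exact_mod_cast hk
    linarith
  have hcard' : ((Finset.univ.erase b).card : ℝ) ≤ k - 1 := by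
    rw [Finset.card_erase_of_mem (Finset.mem_univ b), Finset.card_univ,
      Nat.cast_sub (Fintype.card_pos_iff.2 ⟨b⟩), Nat.cast_one]
    have : (Fintype.card K : ℝ) ≤ k := by exact_mod_cast hcard
    linarith
  rw [← Finset.add_sum_erase _ _ (Finset.mem_univ b), if_pos rfl,
    Finset.sum_congr rfl fun a ha => if_neg (Finset.ne_of_mem_erase ha), Finset.sum_const,
    nsmul_eq_mul]
  have : ((Finset.univ.erase b).card : ℝ) * (ε / (k - 1)) ≤ ε := by
    rw [mul_div_assoc', div_le_iff₀ hk1, mul_comm ε]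
    exact mul_le_mul_of_nonneg_right hcard' hε
  linarith

theorem ConcaveOn.sum_le_card_mul_apply_div {s : Set ℝ} {f : ℝ → ℝ} (hf : ConcaveOn ℝ s f)
    {ι : Type*} (t : Finset ι) {x : ι → ℝ} (hx : ∀ i ∈ t, x i ∈ s) :
    ∑ i ∈ t, f (x i) ≤ t.card * f ((∑ i ∈ t, x i) / t.card) := by
  rcases t.eq_empty_or_nonempty with rfl | ht
  · simp
  have hc : (0 : ℝ) < t.card := by exact_mod_cast ht.card_pos
  have h := hf.le_map_sum (w := fun _ => (t.card : ℝ)⁻¹) (fun _ _ => by positivity)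
    (by simp [hc.ne']) hx
  simp only [smul_eq_mul, ← Finset.mul_sum] at h
  rw [div_eq_inv_mul]
  calc ∑ i ∈ t, f (x i) = t.card * ((t.card : ℝ)⁻¹ * ∑ i ∈ t, f (x i)) := by
        field_simp
    _ ≤ t.card * f ((t.card : ℝ)⁻¹ * ∑ i ∈ t, x i) := by gcongr

namespace MeasureTheory

variable {Ω : Type*} [MeasurableSpace Ω] {μ : Measure Ω} [IsFiniteMeasure μ] {A B : Type*}

theorem measureReal_preimage_le_comp (Z : Ω → A) (f : A → B) (a : A) :
    μ.real (Z ⁻¹' {a}) ≤ μ.real ((fun ω => f (Z ω)) ⁻¹' {f a}) :=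
  measureReal_mono fun ω h => by simp_all

theorem measureReal_preimage_comp_ne_zero {Z : Ω → A} (f : A → B) {a : A}
    (h : μ.real (Z ⁻¹' {a}) ≠ 0) : μ.real ((fun ω => f (Z ω)) ⁻¹' {f a}) ≠ 0 :=
  fun h0 => h (le_antisymm (h0 ▸ measureReal_preimage_le_comp Z f a) measureReal_nonneg)

variable [DiscreteMeasurableSpace Ω] [Fintype A]

theorem sum_measureReal_preimage_singleton_univ (Z : Ω → A) :
    ∑ a, μ.real (Z ⁻¹' {a}) = μ.real Set.univ := by
  rw [sum_measureReal_preimage_singleton _ fun _ _ => .of_discrete]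
  simp

theorem sum_measureReal_preimage_singleton_filter (Z : Ω → A) (P : A → Prop)
    [DecidablePred P] : ∑ a with P a, μ.real (Z ⁻¹' {a}) = μ.real {ω | P (Z ω)} := by
  rw [sum_measureReal_preimage_singleton _ fun _ _ => .of_discrete]
  congr 1
  ext ω
  simp

theorem measureReal_preimage_comp_eq_sum [DecidableEq B] (Z : Ω → A) (f : A → B) (b : B) :
    μ.real ((fun ω => f (Z ω)) ⁻¹' {b}) = ∑ a with f a = b, μ.real (Z ⁻¹' {a}) :=
  (sum_measureReal_preimage_singleton_filter Z fun a => f a = b).symm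

theorem measureReal_preimage_snd_eq_sum [Fintype B] [DecidableEq B] (X : Ω → A) (Y : Ω → B)
    (b : B) :
    μ.real (Y ⁻¹' {b}) = ∑ a, μ.real ((fun ω => (X ω, Y ω)) ⁻¹' {(a, b)}) := by
  have h := measureReal_preimage_comp_eq_sum (μ := μ) (fun ω => (X ω, Y ω)) Prod.snd b
  rw [Finset.sum_filter, Fintype.sum_prod_type] at h
  exact h.trans (Finset.sum_congr rfl fun a _ => by simp)

theorem sum_measureReal_preimage_mul_comp [Fintype B] (Z : Ω → A) (f : A → B) (F : B → ℝ) :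
    ∑ a, μ.real (Z ⁻¹' {a}) * F (f a) = ∑ b, μ.real ((fun ω => f (Z ω)) ⁻¹' {b}) * F b := by
  classical
  simp_rw [measureReal_preimage_comp_eq_sum, Finset.sum_mul]
  rw [← Finset.sum_fiberwise Finset.univ f]
  refine Finset.sum_congr rfl fun b _ => Finset.sum_congr rfl fun a ha => ?_
  rw [(Finset.mem_filter.1 ha).2]

end MeasureTheory

namespace Corr

variable {Ω : Type*} [MeasurableSpace Ω]

theorem shEnt_map {Ω' : Type*} [MeasurableSpace Ω'] [DiscreteMeasurableSpace Ω']
    {μ : Measure Ω} {f : Ω → Ω'} (hf : Measurable f) {K : Type*} [Fintype K] (Z : Ω' → K) :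
    shEnt (μ.map f) Z = shEnt μ (fun ω => Z (f ω)) :=
  Finset.sum_congr rfl fun k _ => by rw [Measure.map_apply hf .of_discrete]; rfl

theorem TC_map {Ω' : Type*} [MeasurableSpace Ω'] [DiscreteMeasurableSpace Ω'] {μ : Measure Ω}
    {f : Ω → Ω'} (hf : Measurable f) {ι : Type*} [Fintype ι] [DecidableEq ι] {Kf : ι → Type*}
    [∀ i, Fintype (Kf i)] (X : ∀ i, Ω' → Kf i) :
    TC (μ.map f) X = TC μ (fun i ω => X i (f ω)) := by
  simp only [TC, shEnt_map hf]
  rfl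

theorem integral_hammingDist [DiscreteMeasurableSpace Ω] (μ : Measure Ω) [IsFiniteMeasure μ]
    {n : ℕ} {K : Fin n → Type*} [∀ i, DecidableEq (K i)] (X Y : Ω → ∀ i, K i) :
    ∫ ω, hammingDist (X ω) (Y ω) ∂μ = (∑ i, μ.real {ω | X ω i ≠ Y ω i}) / n := by
  have hsum : ∀ ω, hammingDist (X ω) (Y ω) = (∑ i, {ω | X ω i ≠ Y ω i}.indicator 1 ω) / n :=
    fun ω => by simp [hammingDist, Finset.card_filter, Set.indicator_apply]
  simp_rw [hsum]
  rw [integral_div, integral_finsetSum _ fun i _ => (integrable_const 1).indicator .of_discrete]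
  simp_rw [integral_indicator_one MeasurableSet.of_discrete]

section Entropy

variable {μ : Measure Ω} {K L M : Type*} [Fintype K] [Fintype L] [Fintype M]

theorem shEnt_comp_of_injective {g : K → L} (hg : Function.Injective g) (X : Ω → K) :
    shEnt μ (fun ω => g (X ω)) = shEnt μ X := by
  refine (Fintype.sum_of_injective g hg _ _ (fun l hl => ?_) fun k => ?_).symm
  · have : (fun ω => g (X ω)) ⁻¹' {l} = ∅ := by
      ext ω
      simpa using fun h => hl ⟨X ω, h⟩
    simp [this]
  · have : (fun ω => g (X ω)) ⁻¹' {g k} = X ⁻¹' {k} := by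
      ext ω
      simp [hg.eq_iff]
    rw [this]

theorem condEnt_comp_of_injective {g : K → L} (hg : Function.Injective g) (X : Ω → K)
    (A : Ω → M) : condEnt μ (fun ω => g (X ω)) A = condEnt μ X A := by
  rw [condEnt, condEnt,
    ← shEnt_comp_of_injective (hg.prodMap Function.injective_id) fun ω => (X ω, A ω)]
  rfl

theorem condEnt_of_subsingleton [Subsingleton K] (X : Ω → K) (A : Ω → M) :
    condEnt μ X A = 0 := by
  have hsnd : Function.Injective (Prod.snd : K × M → M) :=
    fun x y h => Prod.ext (Subsingleton.elim _ _) h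
  rw [condEnt, ← shEnt_comp_of_injective hsnd fun ω => (X ω, A ω), sub_self]

variable [DiscreteMeasurableSpace Ω] [IsFiniteMeasure μ]

theorem sum_measureReal_mul_log_comp (Z : Ω → K) (f : K → L) :
    ∑ a, μ.real (Z ⁻¹' {a}) * log (μ.real ((fun ω => f (Z ω)) ⁻¹' {f a}))
      = -shEnt μ (fun ω => f (Z ω)) := by
  rw [sum_measureReal_preimage_mul_comp Z f fun b => log (μ.real ((fun ω => f (Z ω)) ⁻¹' {b})),
    shEnt, ← Finset.sum_neg_distrib]
  simp only [negMulLog, neg_mul, neg_neg]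
  rfl

theorem shEnt_comp_le (Z : Ω → K) (f : K → L) :
    shEnt μ (fun ω => f (Z ω)) ≤ shEnt μ Z := by
  rw [← neg_neg (shEnt μ _), ← sum_measureReal_mul_log_comp Z f, ← Finset.sum_neg_distrib]
  refine Finset.sum_le_sum fun k _ => ?_
  show -(μ.real (Z ⁻¹' {k}) * _) ≤ negMulLog (μ.real (Z ⁻¹' {k}))
  rcases (measureReal_nonneg (μ := μ) (s := Z ⁻¹' {k})).eq_or_lt with h | h
  · simp [← h]
  · rw [negMulLog, neg_mul]
    exact neg_le_neg (mul_le_mul_of_nonneg_left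
      (log_le_log h (measureReal_preimage_le_comp Z f k)) h.le)

theorem shEnt_sub_shEnt_le_condEnt (X : Ω → K) (Y : Ω → L) :
    shEnt μ X - shEnt μ Y ≤ condEnt μ X Y :=
  sub_le_sub_right (shEnt_comp_le (fun ω => (X ω, Y ω)) Prod.fst) _

theorem condEnt_le_neg_sum_mul_log (X : Ω → K) (Y : Ω → L) (c : K × L → ℝ)
    (hc0 : ∀ p, 0 ≤ c p) (hc1 : ∀ b, ∑ a, c (a, b) ≤ 1)
    (hc : ∀ p, μ.real ((fun ω => (X ω, Y ω)) ⁻¹' {p}) ≠ 0 → c p ≠ 0) :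
    condEnt μ X Y ≤ -∑ p, μ.real ((fun ω => (X ω, Y ω)) ⁻¹' {p}) * log (c p) := by
  set Z := fun ω => (X ω, Y ω)
  have hZ : ∀ p, μ.real (Z ⁻¹' {p}) ≠ 0 → μ.real (Y ⁻¹' {p.2}) ≠ 0 ∧ c p ≠ 0 :=
    fun p h => ⟨measureReal_preimage_comp_ne_zero Prod.snd h, hc p h⟩
  have hsum : ∑ p, μ.real (Y ⁻¹' {p.2}) * c p ≤ ∑ p, μ.real (Z ⁻¹' {p}) := calc
    ∑ p, μ.real (Y ⁻¹' {p.2}) * c p = ∑ b, μ.real (Y ⁻¹' {b}) * ∑ a, c (a, b) := by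
      rw [Fintype.sum_prod_type, Finset.sum_comm]
      simp only [Finset.mul_sum]
    _ ≤ ∑ b, μ.real (Y ⁻¹' {b}) :=
      Finset.sum_le_sum fun b _ => mul_le_of_le_one_right measureReal_nonneg (hc1 b)
    _ = ∑ p, μ.real (Z ⁻¹' {p}) := by
      rw [sum_measureReal_preimage_singleton_univ, sum_measureReal_preimage_singleton_univ]
  have hgibbs := sum_negMulLog_le_neg_sum_mul_log (fun p => measureReal_nonneg)
    (fun p => mul_nonneg measureReal_nonneg (hc0 p)) (fun p h => mul_ne_zero_iff.2 (hZ p h)) hsum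
  simp only [fun p => mul_log_mul_of_ne_zero (hZ p), Finset.sum_add_distrib] at hgibbs
  rw [sum_measureReal_mul_log_comp Z Prod.snd] at hgibbs
  rw [condEnt]
  change shEnt μ Z ≤ _ at hgibbs
  linarith

/-- Fano's inequality. -/
theorem condEnt_le_qaryEntropy [IsProbabilityMeasure μ] {k : ℕ} (hk : 2 ≤ k)
    (hcard : Fintype.card K ≤ k) (X Y : Ω → K) :
    condEnt μ X Y ≤ qaryEntropy k (μ.real {ω | X ω ≠ Y ω}) := by
  classical
  set ε := μ.real {ω | X ω ≠ Y ω}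
  have hk1 : (0 : ℝ) < k - 1 := by
    have : (2 : ℝ) ≤ k := by exact_mod_cast hk
    linarith
  have hε1 : ε ≤ 1 := measureReal_le_one
  have hdiag : μ.real {ω | X ω = Y ω} = 1 - ε := by
    rw [← probReal_compl_eq_one_sub .of_discrete]
    congr 1
    ext ω
    simp
  have hc : ∀ p : K × K, μ.real ((fun ω => (X ω, Y ω)) ⁻¹' {p}) ≠ 0 →
      (if p.1 = p.2 then 1 - ε else ε / (k - 1)) ≠ 0 := fun p h => by
    have hpos := measureReal_nonneg.lt_of_ne' h
    split_ifs with hp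
    · have : μ.real ((fun ω => (X ω, Y ω)) ⁻¹' {p}) ≤ 1 - ε :=
        hdiag ▸ measureReal_mono fun ω (hω : (X ω, Y ω) = p) => by rw [← hω] at hp; exact hp
      linarith
    · have : μ.real ((fun ω => (X ω, Y ω)) ⁻¹' {p}) ≤ ε :=
        measureReal_mono fun ω (hω : (X ω, Y ω) = p) => by rw [← hω] at hp; exact hp
      exact div_ne_zero (by linarith) hk1.ne'
  refine (condEnt_le_neg_sum_mul_log X Y _ (fun p => by split_ifs <;> first | linarith | positivity)
    (sum_ite_eq_one_sub_div_le_one hk hcard measureReal_nonneg) hc).trans_eq ?_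
  simp only [apply_ite log, mul_ite, Finset.sum_ite, ← Finset.sum_mul,
    sum_measureReal_preimage_singleton_filter, hdiag]
  exact (qaryEntropy_eq_neg_mul_log_add_mul_log_div hk1.ne' ε).symm

theorem condEnt_pair_le (U : Ω → K) (V : Ω → L) (W : Ω → M) :
    condEnt μ (fun ω => (U ω, V ω)) W ≤ condEnt μ U W + condEnt μ V W := by
  classical
  set Z := fun ω => ((U ω, V ω), W ω)
  set r := fun a => μ.real (Z ⁻¹' {a})
  set p := fun b : K × M => μ.real ((fun ω => (U ω, W ω)) ⁻¹' {b})
  set q := fun b : L × M => μ.real ((fun ω => (V ω, W ω)) ⁻¹' {b})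
  set s := fun w => μ.real (W ⁻¹' {w})
  have hr : ∀ a, r a ≠ 0 → p (a.1.1, a.2) ≠ 0 ∧ q (a.1.2, a.2) ≠ 0 ∧ s a.2 ≠ 0 := fun a h =>
    ⟨measureReal_preimage_comp_ne_zero (fun a => (a.1.1, a.2)) h,
      measureReal_preimage_comp_ne_zero (fun a => (a.1.2, a.2)) h,
      measureReal_preimage_comp_ne_zero Prod.snd h⟩
  have hlog : ∀ a, r a * log (p (a.1.1, a.2) * q (a.1.2, a.2) / s a.2)
      = r a * log (p (a.1.1, a.2)) + r a * log (q (a.1.2, a.2)) - r a * log (s a.2) := fun a => by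
    by_cases h : r a = 0
    · simp [h]
    · obtain ⟨hp, hq, hs⟩ := hr a h
      rw [log_div (mul_ne_zero hp hq) hs, log_mul hp hq]
      ring
  have hsum : ∑ a : (K × L) × M, p (a.1.1, a.2) * q (a.1.2, a.2) / s a.2 = ∑ a, r a := calc
    _ = ∑ w, (∑ u, p (u, w)) * (∑ v, q (v, w)) / s w := by
      simp only [Fintype.sum_prod_type, Finset.sum_mul_sum, Finset.sum_div]
      exact (Finset.sum_congr rfl fun _ _ => Finset.sum_comm).trans Finset.sum_comm
    _ = ∑ w, s w := by
      simp only [p, q, s, ← measureReal_preimage_snd_eq_sum, mul_self_div_self]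
    _ = ∑ a, r a := by
      rw [sum_measureReal_preimage_singleton_univ, sum_measureReal_preimage_singleton_univ]
  have hgibbs := sum_negMulLog_le_neg_sum_mul_log (r := r) (fun a => measureReal_nonneg)
    (t := fun a : (K × L) × M => p (a.1.1, a.2) * q (a.1.2, a.2) / s a.2)
    (fun a => by positivity) (fun a h => by have := hr a h; simp [this]) hsum.le
  simp only [hlog, Finset.sum_sub_distrib, Finset.sum_add_distrib] at hgibbs
  rw [sum_measureReal_mul_log_comp Z (fun a => (a.1.1, a.2)),
    sum_measureReal_mul_log_comp Z (fun a => (a.1.2, a.2)),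
    sum_measureReal_mul_log_comp Z Prod.snd] at hgibbs
  rw [condEnt, condEnt, condEnt]
  change shEnt μ Z ≤ _ at hgibbs
  linarith

theorem condEnt_le_condEnt_comp (Y : Ω → K) (A : Ω → M) (e : M → L) :
    condEnt μ Y A ≤ condEnt μ Y (fun ω => e (A ω)) := by
  have h := condEnt_pair_le (μ := μ) Y A fun ω => e (A ω)
  have hYA : shEnt μ (fun ω => ((Y ω, A ω), e (A ω))) = shEnt μ (fun ω => (Y ω, A ω)) :=
    shEnt_comp_of_injective (g := fun x : K × M => (x, e x.2))
      (fun x y hxy => congrArg Prod.fst hxy) _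
  have hA : shEnt μ (fun ω => (A ω, e (A ω))) = shEnt μ A :=
    shEnt_comp_of_injective (g := fun x : M => (x, e x)) (fun x y hxy => congrArg Prod.fst hxy) _
  unfold condEnt at h ⊢
  rw [hYA, hA] at h
  linarith

section Families

variable {ι : Type*} [DecidableEq ι] {Kf : ι → Type*} [∀ i, Fintype (Kf i)]

theorem condEnt_subtype_pi_le_sum (Y : ∀ i, Ω → Kf i) (A : Ω → M) (T : Finset ι) :
    condEnt μ (fun ω (j : T) => Y j ω) A ≤ ∑ i ∈ T, condEnt μ (Y i) A := by
  induction T using Finset.cons_induction with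
  | empty => simp [condEnt_of_subsingleton]
  | cons i T hi ih =>
    have hsplit : Function.Injective fun x : (∀ j : Finset.cons i T hi, Kf j) =>
        (x ⟨i, Finset.mem_cons_self i T⟩, fun j : T => x ⟨j, Finset.mem_cons_of_mem j.2⟩) := by
      intro x y hxy
      funext ⟨j, hj⟩
      rcases Finset.mem_cons.1 hj with rfl | hj
      · exact congrArg Prod.fst hxy
      · exact congrFun (congrArg Prod.snd hxy) ⟨j, hj⟩
    rw [← condEnt_comp_of_injective hsplit, Finset.sum_cons]
    exact (condEnt_pair_le _ _ _).trans (add_le_add le_rfl ih)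

theorem condEnt_joint_le_sum_condEnt [Fintype ι] {L : ι → Type*} [∀ i, Fintype (L i)]
    (Y : ∀ i, Ω → Kf i) (X : ∀ i, Ω → L i) :
    condEnt μ (joint Y) (joint X) ≤ ∑ i, condEnt μ (Y i) (X i) := by
  have hrestrict :
      Function.Injective fun x : (∀ j, Kf j) => fun j : (Finset.univ : Finset ι) => x j :=
    fun x y hxy => funext fun j => congrFun hxy ⟨j, Finset.mem_univ j⟩
  rw [← condEnt_comp_of_injective hrestrict]
  exact (condEnt_subtype_pi_le_sum Y (joint X) Finset.univ).trans
    (Finset.sum_le_sum fun i _ => condEnt_le_condEnt_comp (Y i) (joint X) fun x => x i)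

variable [Fintype ι] [IsProbabilityMeasure μ] {k : ℕ}

theorem TC_sub_TC_le (hk : 2 ≤ k) (hcard : ∀ i, Fintype.card (Kf i) ≤ k)
    (X Y : ∀ i, Ω → Kf i) :
    TC μ X - TC μ Y ≤ 2 * ∑ i, qaryEntropy k (μ.real {ω | X i ω ≠ Y i ω}) := by
  have hmarg : ∑ i, (shEnt μ (X i) - shEnt μ (Y i))
      ≤ ∑ i, qaryEntropy k (μ.real {ω | X i ω ≠ Y i ω}) := Finset.sum_le_sum fun i _ =>
    (shEnt_sub_shEnt_le_condEnt _ _).trans (condEnt_le_qaryEntropy hk (hcard i) _ _)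
  have hjoint : shEnt μ (joint Y) - shEnt μ (joint X)
      ≤ ∑ i, qaryEntropy k (μ.real {ω | X i ω ≠ Y i ω}) := calc
    _ ≤ condEnt μ (joint Y) (joint X) := shEnt_sub_shEnt_le_condEnt _ _
    _ ≤ ∑ i, condEnt μ (Y i) (X i) := condEnt_joint_le_sum_condEnt Y X
    _ ≤ ∑ i, qaryEntropy k (μ.real {ω | X i ω ≠ Y i ω}) := Finset.sum_le_sum fun i _ => by
      simpa only [ne_comm] using condEnt_le_qaryEntropy hk (hcard i) (Y i) (X i)
  rw [Finset.sum_sub_distrib] at hmarg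
  rw [TC, TC]
  linarith

theorem abs_TC_sub_TC_le (hk : 2 ≤ k) (hcard : ∀ i, Fintype.card (Kf i) ≤ k)
    (X Y : ∀ i, Ω → Kf i) :
    |TC μ X - TC μ Y| ≤ 2 * ∑ i, qaryEntropy k (μ.real {ω | X i ω ≠ Y i ω}) := by
  refine abs_sub_le_iff.2 ⟨TC_sub_TC_le hk hcard X Y, ?_⟩
  simpa only [ne_comm] using TC_sub_TC_le hk hcard Y X

end Families

end Entropy

theorem tc_robust_general {n k : ℕ} (hk : 2 ≤ k) {K : Fin n → Type*} [∀ i, Fintype (K i)]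
    [∀ i, DecidableEq (K i)]
    [∀ i, MeasurableSpace (K i)] [∀ i, MeasurableSingletonClass (K i)]
    (hcard : ∀ i, Fintype.card (K i) ≤ k)
    (μ ν : Measure (∀ i, K i)) [IsProbabilityMeasure μ] [IsProbabilityMeasure ν]
    (lam : Measure ((∀ i, K i) × (∀ i, K i))) [IsProbabilityMeasure lam]
    (hfst : lam.map Prod.fst = μ) (hsnd : lam.map Prod.snd = ν)
    (δ : ℝ) (hδ : δ = ∫ p, hammingDist p.1 p.2 ∂lam) :
    |TC μ (fun i x => x i) - TC ν (fun i x => x i)| ≤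
      2 * ((Real.negMulLog δ + Real.negMulLog (1 - δ)) + δ * Real.log ((k : ℝ) - 1)) * n := by
  set ε := fun i => lam.real {p | p.1 i ≠ p.2 i}
  have hdiff : |TC μ (fun i x => x i) - TC ν (fun i x => x i)|
      ≤ 2 * ∑ i, qaryEntropy k (ε i) := by
    rw [← hfst, ← hsnd, TC_map measurable_fst, TC_map measurable_snd]
    exact abs_TC_sub_TC_le hk hcard _ _
  have hjensen : ∑ i, qaryEntropy k (ε i) ≤ n * qaryEntropy k δ := by
    have h := (strictConcaveOn_qaryEntropy (q := k)).concaveOn.sum_le_card_mul_apply_div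
      Finset.univ (x := ε) fun i _ => ⟨measureReal_nonneg, measureReal_le_one⟩
    rw [Finset.card_univ, Fintype.card_fin] at h
    rwa [hδ, integral_hammingDist lam Prod.fst Prod.snd]
  rw [← qaryEntropy_eq_negMulLog_add]
  linarith

/-- If each `Kᵢ` has cardinality at most `k` (with `k ≥ 2`), `λ` is any
coupling of `μ, ν ∈ Pr(∏ᵢ Kᵢ)` and `δ := ∫ d_n dλ`, then
`|TC(μ) − TC(ν)| ≤ 2·(H(δ,1−δ) + δ·log(k−1))·n`, where `H(δ,1−δ)` is the binary entropy. -/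
theorem tc_robust {n k : ℕ} (hk : 2 ≤ k) {K : Fin n → Type*} [∀ i, Fintype (K i)]
    [∀ i, Nonempty (K i)] [∀ i, DecidableEq (K i)]
    [∀ i, MeasurableSpace (K i)] [∀ i, MeasurableSingletonClass (K i)]
    (hcard : ∀ i, Fintype.card (K i) ≤ k)
    (μ ν : Measure (∀ i, K i)) [IsProbabilityMeasure μ] [IsProbabilityMeasure ν]
    (lam : Measure ((∀ i, K i) × (∀ i, K i))) [IsProbabilityMeasure lam]
    (hfst : lam.map Prod.fst = μ) (hsnd : lam.map Prod.snd = ν)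
    (δ : ℝ) (hδ : δ = ∫ p, hammingDist p.1 p.2 ∂lam) :
    |TC μ (fun i x => x i) - TC ν (fun i x => x i)| ≤
      2 * ((Real.negMulLog δ + Real.negMulLog (1 - δ)) + δ * Real.log ((k : ℝ) - 1)) * n :=
  tc_robust_general hk hcard μ ν lam hfst hsnd δ hδ

end Corr
end

section
/- For any finite-valued random variables X₁, …, Xₙ and any finite-valued random variable Y on a common probability space, DTC(X₁;…;Xₙ) ≤ DTC(X₁;…;Xₙ | Y) + I(X₁,…,Xₙ ; Y). (This is the finite-valued form of the statement that the dual total correlation of a mixture is at most the average dual total correlation of the terms plus the mutual information in the mixture.) -/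
open MeasureTheory Real

namespace Corr

variable {Ω : Type*} [MeasurableSpace Ω]

lemma negMulLog_sum' {ι : Type*} [Fintype ι] (f : ι → ℝ) :
    Real.negMulLog (∑ x, f x) = ∑ x, -(f x * Real.log (∑ y, f y)) := by
  rw [Real.negMulLog, neg_mul, Finset.sum_neg_distrib, ← Finset.sum_mul]

lemma negMulLog_sum2' {ι κ : Type*} [Fintype ι] [Fintype κ] (f : ι → κ → ℝ) :
    Real.negMulLog (∑ i, ∑ j, f i j)
      = ∑ i, ∑ j, -(f i j * Real.log (∑ i', ∑ j', f i' j')) := by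
  simp only [Real.negMulLog, neg_mul, Finset.sum_mul, Finset.sum_neg_distrib]

lemma submod' {α β γ : Type*} [Fintype α] [Fintype β] [Fintype γ]
    (p : α → β → γ → ℝ) (hp : ∀ a b c, 0 ≤ p a b c) :
    (∑ a, ∑ b, ∑ c, Real.negMulLog (p a b c)) + ∑ b, Real.negMulLog (∑ a, ∑ c, p a b c)
      ≤ (∑ a, ∑ b, Real.negMulLog (∑ c, p a b c))
        + ∑ b, ∑ c, Real.negMulLog (∑ a, p a b c) := by
  classical
  set pAB : α → β → ℝ := fun a b => ∑ c, p a b c with hpAB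
  set pBC : β → γ → ℝ := fun b c => ∑ a, p a b c with hpBC
  set pB : β → ℝ := fun b => ∑ a, ∑ c, p a b c with hpB
  set q : α → β → γ → ℝ := fun a b c => if pB b = 0 then 0 else pAB a b * pBC b c / pB b with hq
  have hpABnn : ∀ a b, 0 ≤ pAB a b := fun a b => Finset.sum_nonneg fun c _ => hp a b c
  have hpBCnn : ∀ b c, 0 ≤ pBC b c := fun b c => Finset.sum_nonneg fun a _ => hp a b c
  have hpBnn : ∀ b, 0 ≤ pB b := fun b => Finset.sum_nonneg fun a _ => hpABnn a b
  have key : ∀ a b c,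
      p a b c * Real.log (pAB a b) + p a b c * Real.log (pBC b c)
        - p a b c * Real.log (pB b) - p a b c * Real.log (p a b c)
      ≤ q a b c - p a b c := by
    intro a b c
    rcases eq_or_lt_of_le (hp a b c) with h0 | hpos
    · have hqnn : 0 ≤ q a b c := by
        by_cases hB : pB b = 0
        · simp [hq, hB]
        · simp only [hq, if_neg hB]
          exact div_nonneg (mul_nonneg (hpABnn a b) (hpBCnn b c)) (hpBnn b)
      rw [← h0]
      simpa using hqnn
    · have hAB : 0 < pAB a b :=
        lt_of_lt_of_le hpos (Finset.single_le_sum (fun c' _ => hp a b c') (Finset.mem_univ c))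
      have hBC : 0 < pBC b c :=
        lt_of_lt_of_le hpos (Finset.single_le_sum (fun a' _ => hp a' b c) (Finset.mem_univ a))
      have hB : 0 < pB b :=
        lt_of_lt_of_le hAB (Finset.single_le_sum (fun a' _ => hpABnn a' b) (Finset.mem_univ a))
      have hqval : q a b c = pAB a b * pBC b c / pB b := by simp [hq, hB.ne']
      have hqpos : 0 < q a b c := by rw [hqval]; positivity
      have hlog : Real.log (q a b c / p a b c) ≤ q a b c / p a b c - 1 :=
        Real.log_le_sub_one_of_pos (by positivity)
      have hlogeq : Real.log (q a b c / p a b c)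
          = Real.log (pAB a b) + Real.log (pBC b c) - Real.log (pB b) - Real.log (p a b c) := by
        rw [Real.log_div hqpos.ne' hpos.ne', hqval, Real.log_div (by positivity) hB.ne',
          Real.log_mul hAB.ne' hBC.ne']
      have hmul := mul_le_mul_of_nonneg_left hlog (le_of_lt hpos)
      rw [hlogeq] at hmul
      have heq : p a b c * (q a b c / p a b c - 1) = q a b c - p a b c := by
        field_simp
      rw [heq] at hmul
      nlinarith [hmul]
  have hsumq : (∑ a, ∑ b, ∑ c, (q a b c - p a b c)) = 0 := by
    rw [Finset.sum_comm]
    apply Finset.sum_eq_zero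
    intro b _
    have h1 : (∑ a, ∑ c, (q a b c - p a b c)) = (∑ a, ∑ c, q a b c) - pB b := by
      rw [hpB, ← Finset.sum_sub_distrib]
      exact Finset.sum_congr rfl fun a _ => by rw [← Finset.sum_sub_distrib]
    rw [h1]
    by_cases hB : pB b = 0
    · have hz : ∀ a c, q a b c = 0 := by intro a c; simp [hq, hB]
      simp [hz, hB]
    · have hsum : (∑ a, ∑ c, q a b c) = pB b := by
        have hstep : ∀ a, (∑ c, q a b c) = pAB a b * pB b / pB b := by
          intro a
          simp only [hq, if_neg hB]
          rw [← Finset.sum_div, ← Finset.mul_sum]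
          congr 2
          rw [hpBC, hpB, Finset.sum_comm]
        simp only [hstep]
        have hPB : (∑ a, pAB a b) = pB b := rfl
        rw [← Finset.sum_div, ← Finset.sum_mul, hPB]
        field_simp
      rw [hsum]; ring
  have hsum_le : (∑ a, ∑ b, ∑ c,
      (p a b c * Real.log (pAB a b) + p a b c * Real.log (pBC b c)
        - p a b c * Real.log (pB b) - p a b c * Real.log (p a b c))) ≤ 0 := by
    calc (∑ a, ∑ b, ∑ c,
      (p a b c * Real.log (pAB a b) + p a b c * Real.log (pBC b c)
        - p a b c * Real.log (pB b) - p a b c * Real.log (p a b c)))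
        ≤ ∑ a, ∑ b, ∑ c, (q a b c - p a b c) := by
          refine Finset.sum_le_sum fun a _ => Finset.sum_le_sum fun b _ =>
            Finset.sum_le_sum fun c _ => key a b c
      _ = 0 := hsumq
  have e1 : (∑ a, ∑ b, Real.negMulLog (pAB a b))
      = ∑ a, ∑ b, ∑ c, -(p a b c * Real.log (pAB a b)) := by
    refine Finset.sum_congr rfl fun a _ => Finset.sum_congr rfl fun b _ => ?_
    simp only [hpAB]
    exact negMulLog_sum' _
  have e2 : (∑ b, ∑ c, Real.negMulLog (pBC b c))
      = ∑ a, ∑ b, ∑ c, -(p a b c * Real.log (pBC b c)) := by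
    rw [Finset.sum_comm (f := fun a b => ∑ c, -(p a b c * Real.log (pBC b c)))]
    refine Finset.sum_congr rfl fun b _ => ?_
    rw [Finset.sum_comm]
    refine Finset.sum_congr rfl fun c _ => ?_
    simp only [hpBC]
    exact negMulLog_sum' _
  have e3 : (∑ b, Real.negMulLog (pB b))
      = ∑ a, ∑ b, ∑ c, -(p a b c * Real.log (pB b)) := by
    rw [Finset.sum_comm (f := fun a b => ∑ c, -(p a b c * Real.log (pB b)))]
    refine Finset.sum_congr rfl fun b _ => ?_
    simp only [hpB]
    exact negMulLog_sum2' _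
  have e0 : (∑ a, ∑ b, ∑ c, Real.negMulLog (p a b c))
      = ∑ a, ∑ b, ∑ c, -(p a b c * Real.log (p a b c))  := by
    refine Finset.sum_congr rfl fun a _ => Finset.sum_congr rfl fun b _ =>
      Finset.sum_congr rfl fun c _ => ?_
    rw [Real.negMulLog, neg_mul]
  rw [e0, e1, e2, e3]
  rw [show (∑ a, ∑ b, ∑ c,
      (p a b c * Real.log (pAB a b) + p a b c * Real.log (pBC b c)
        - p a b c * Real.log (pB b) - p a b c * Real.log (p a b c)))
      = ((∑ a, ∑ b, ∑ c, p a b c * Real.log (pAB a b))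
        + (∑ a, ∑ b, ∑ c, p a b c * Real.log (pBC b c))
        - (∑ a, ∑ b, ∑ c, p a b c * Real.log (pB b))
        - (∑ a, ∑ b, ∑ c, p a b c * Real.log (p a b c)))
    from by simp only [Finset.sum_add_distrib, Finset.sum_sub_distrib]] at hsum_le
  simp only [Finset.sum_neg_distrib]
  linarith [hsum_le]


lemma meas_split' {γ' : Type*} [Fintype γ'] (μ : Measure Ω) [IsProbabilityMeasure μ]
    {s : Set Ω} (hs : MeasurableSet s) {h : Ω → γ'}
    (hh : ∀ c, MeasurableSet (h ⁻¹' {c})) :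
    (μ s).toReal = ∑ c, (μ (s ∩ h ⁻¹' {c})).toReal := by
  have hdec : s = ⋃ c, s ∩ h ⁻¹' {c} := by ext ω; simp
  have hdisj : Pairwise (Function.onFun Disjoint fun c => s ∩ h ⁻¹' {c}) := by
    intro c c' hne
    simp only [Function.onFun, Set.disjoint_left]
    rintro ω ⟨-, h1⟩ ⟨-, h2⟩
    simp only [Set.mem_preimage, Set.mem_singleton_iff] at h1 h2
    exact hne (h1.symm.trans h2)
  have h1 : μ s = ∑ c, μ (s ∩ h ⁻¹' {c}) := by
    conv_lhs => rw [hdec]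
    rw [measure_iUnion hdisj fun c => hs.inter (hh c), tsum_fintype]
  rw [h1, ENNReal.toReal_sum fun c _ => measure_ne_top μ _]

lemma submod_ent {α β γ' : Type*} [Fintype α] [Fintype β] [Fintype γ']
    (μ : Measure Ω) [IsProbabilityMeasure μ]
    (A : Ω → α) (Z : Ω → β) (C : Ω → γ')
    (hA : ∀ a, MeasurableSet (A ⁻¹' {a}))
    (hZ : ∀ b, MeasurableSet (Z ⁻¹' {b}))
    (hC : ∀ c, MeasurableSet (C ⁻¹' {c})) :
    shEnt μ (fun ω => (A ω, (Z ω, C ω))) + shEnt μ Z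
      ≤ shEnt μ (fun ω => (A ω, Z ω)) + shEnt μ (fun ω => (Z ω, C ω)) := by
  classical
  set p : α → β → γ' → ℝ :=
    fun a b c => (μ (A ⁻¹' {a} ∩ Z ⁻¹' {b} ∩ C ⁻¹' {c})).toReal with hp_def
  have hp : ∀ a b c, 0 ≤ p a b c := fun a b c => ENNReal.toReal_nonneg
  have E1 : shEnt μ (fun ω => (A ω, (Z ω, C ω)))
      = ∑ a, ∑ b, ∑ c, Real.negMulLog (p a b c) := by
    rw [shEnt, Fintype.sum_prod_type]
    refine Finset.sum_congr rfl fun a _ => ?_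
    rw [Fintype.sum_prod_type]
    refine Finset.sum_congr rfl fun b _ => Finset.sum_congr rfl fun c _ => ?_
    have hset : (fun ω => (A ω, (Z ω, C ω))) ⁻¹' {(a, (b, c))}
        = A ⁻¹' {a} ∩ Z ⁻¹' {b} ∩ C ⁻¹' {c} := by
      ext ω; simp [Prod.ext_iff, and_assoc]
    rw [hset]
  have E2 : shEnt μ (fun ω => (A ω, Z ω))
      = ∑ a, ∑ b, Real.negMulLog (∑ c, p a b c) := by
    rw [shEnt, Fintype.sum_prod_type]
    refine Finset.sum_congr rfl fun a _ => Finset.sum_congr rfl fun b _ => ?_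
    have hset : (fun ω => (A ω, Z ω)) ⁻¹' {(a, b)} = A ⁻¹' {a} ∩ Z ⁻¹' {b} := by
      ext ω; simp [Prod.ext_iff]
    rw [hset, meas_split' μ ((hA a).inter (hZ b)) hC]
  have E3 : shEnt μ (fun ω => (Z ω, C ω))
      = ∑ b, ∑ c, Real.negMulLog (∑ a, p a b c) := by
    rw [shEnt, Fintype.sum_prod_type]
    refine Finset.sum_congr rfl fun b _ => Finset.sum_congr rfl fun c _ => ?_
    have hset : (fun ω => (Z ω, C ω)) ⁻¹' {(b, c)} = Z ⁻¹' {b} ∩ C ⁻¹' {c} := by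
      ext ω; simp [Prod.ext_iff]
    rw [hset, meas_split' μ ((hZ b).inter (hC c)) hA]
    congr 1
    refine Finset.sum_congr rfl fun a _ => ?_
    congr 2
    ext ω
    simp only [Set.mem_inter_iff, Set.mem_preimage]
    tauto
  have E4 : shEnt μ Z = ∑ b, Real.negMulLog (∑ a, ∑ c, p a b c) := by
    rw [shEnt]
    refine Finset.sum_congr rfl fun b _ => ?_
    rw [meas_split' μ (hZ b) hA]
    congr 1
    refine Finset.sum_congr rfl fun a _ => ?_
    rw [meas_split' μ ((hZ b).inter (hA a)) hC]
    refine Finset.sum_congr rfl fun c _ => ?_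
    congr 2
    ext ω
    simp only [Set.mem_inter_iff, Set.mem_preimage]
    tauto
  rw [E1, E2, E3, E4]
  exact submod' p hp


/-- For finite-valued `X₁, …, Xₙ` and `Y`,
`DTC(X₁;…;Xₙ) ≤ DTC(X₁;…;Xₙ | Y) + I(X₁,…,Xₙ ; Y)`. -/
theorem dtc_le_condDTC_add_mutInfo (μ : Measure Ω) [IsProbabilityMeasure μ]
    {n : ℕ} {K : Fin n → Type*} [∀ i, Fintype (K i)]
    [∀ i, MeasurableSpace (K i)] [∀ i, MeasurableSingletonClass (K i)]
    {L : Type*} [Fintype L] [MeasurableSpace L] [MeasurableSingletonClass L]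
    (X : ∀ i, Ω → K i) (hX : ∀ i, Measurable (X i))
    (Y : Ω → L) (hY : Measurable Y) :
    DTC μ X ≤ condDTC μ X Y + mutInfo μ (joint X) Y := by
  classical
  have hZ : ∀ i : Fin n, ∀ b,
      MeasurableSet ((joint fun j : {j : Fin n // j ≠ i} => X j.1) ⁻¹' {b}) := by
    intro i b
    have hset : (joint fun j : {j : Fin n // j ≠ i} => X j.1) ⁻¹' {b}
        = ⋂ j : {j : Fin n // j ≠ i}, X j.1 ⁻¹' {b j} := by
      ext ω; simp [joint, funext_iff]
    rw [hset]
    exact MeasurableSet.iInter fun j => hX j.1 (measurableSet_singleton _)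
  have key : ∀ i : Fin n,
      shEnt μ (fun ω =>
          (X i ω, ((joint fun j : {j : Fin n // j ≠ i} => X j.1) ω, Y ω)))
        + shEnt μ (joint fun j : {j : Fin n // j ≠ i} => X j.1)
      ≤ shEnt μ (fun ω => (X i ω, (joint fun j : {j : Fin n // j ≠ i} => X j.1) ω))
        + shEnt μ (fun ω => ((joint fun j : {j : Fin n // j ≠ i} => X j.1) ω, Y ω)) :=
    fun i => submod_ent μ (X i) _ Y (fun a => hX i (measurableSet_singleton a)) (hZ i)
      (fun c => hY (measurableSet_singleton c))
  simp only [DTC, condDTC, mutInfo, condEnt]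
  have hsum : ∑ i : Fin n,
      (shEnt μ (fun ω =>
          (X i ω, ((joint fun j : {j : Fin n // j ≠ i} => X j.1) ω, Y ω)))
        - shEnt μ (fun ω => ((joint fun j : {j : Fin n // j ≠ i} => X j.1) ω, Y ω)))
      ≤ ∑ i : Fin n,
      (shEnt μ (fun ω => (X i ω, (joint fun j : {j : Fin n // j ≠ i} => X j.1) ω))
        - shEnt μ (joint fun j : {j : Fin n // j ≠ i} => X j.1)) :=
    Finset.sum_le_sum fun i _ => by linarith [key i]
  linarith [hsum]


end Corr
end
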